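/- In the firing-squad model with epistemic state ({(M,u₁), …, (M,u₁₀)}, Pr), where in context u_j marksman j has the live bullet and all ten marksmen shoot, and Pr((M,u_j)) = p_j: the degree of responsibility dr((M_{S₁←1}, u_j), S₁ = 1, D = 1) equals 1 if j = 1 and 0 if j ≠ 1, and hence the degree of blame of marksman 1's shot for the death, db(K, Pr, S₁←1, D = 1), equals p₁. -/

import Mathlib

open Classical

/-- A causal model over exogenous variables `U` and endogenous variables `V`,
with integer-valued variables.  `Rexo Y` / `R X` are the (intended) ranges of
the variables, and `F X` is the structural equation for the endogenous
variable `X`, giving its value as a function of the values of all other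
variables. -/
structure CausalModel (U V : Type) where
  Rexo : U → Set ℤ
  R : V → Set ℤ
  F : V → (U → ℤ) → (V → ℤ) → ℤ

namespace CausalModel

variable {U V : Type}

/-- A causal model is recursive if the variables can be ordered so that each
structural equation depends only on the values of strictly earlier endogenous
variables (equivalently, the dependency graph is acyclic). -/
def Recursive (M : CausalModel U V) : Prop :=
  ∃ ord : V → ℕ, ∀ (X : V) (u : U → ℤ) (g g' : V → ℤ),
    (∀ Y, ord Y < ord X → g Y = g' Y) → M.F X u g = M.F X u g'

/-- `s` simultaneously satisfies all the structural equations in context `u`. -/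
def IsSolution (M : CausalModel U V) (u : U → ℤ) (s : V → ℤ) : Prop :=
  ∀ X, s X = M.F X u s

/-- The (unique, for recursive models) solution of the equations in context `u`. -/
noncomputable def solution (M : CausalModel U V) (u : U → ℤ) : V → ℤ :=
  Classical.epsilon fun s => M.IsSolution u s

/-- The model `M_{A ← y}` obtained by replacing the equations of the variables
in `A` by the constant values given by `y`. -/
noncomputable def intervene (M : CausalModel U V) (A : Set V) (y : V → ℤ) :
    CausalModel U V where
  Rexo := M.Rexo
  R := M.R
  F := fun X u g => if X ∈ A then y X else M.F X u g

end CausalModel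

/-- Boolean combinations of primitive events `X = x`. -/
inductive CausalFormula (V : Type) where
  | tru : CausalFormula V
  | eq : V → ℤ → CausalFormula V
  | not : CausalFormula V → CausalFormula V
  | and : CausalFormula V → CausalFormula V → CausalFormula V
  | or : CausalFormula V → CausalFormula V → CausalFormula V
  | iff : CausalFormula V → CausalFormula V → CausalFormula V

/-- Truth of a causal formula under an assignment to the endogenous variables. -/
def CausalFormula.holds {V : Type} (s : V → ℤ) : CausalFormula V → Prop
  | tru => True
  | eq X x => s X = x
  | not φ => ¬ φ.holds s
  | and φ χ => φ.holds s ∧ χ.holds s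
  | or φ χ => φ.holds s ∨ χ.holds s
  | iff φ χ => φ.holds s ↔ χ.holds s

/-- `(M,u) ⊨ [A ← y] φ` : `φ` holds in the unique solution of `M_{A ← y}` in
context `u`. -/
def sat {U V : Type} (M : CausalModel U V) (u : U → ℤ) (A : Set V) (y : V → ℤ)
    (φ : CausalFormula V) : Prop :=
  φ.holds ((M.intervene A y).solution u)

/-- Condition AC2 of the Halpern–Pearl definition of causality, for the single
conjunct `X = x`, witnessed by the partition `(Wᶜ, W)` (so `Z = Wᶜ ∋ X`) and
the setting `(x', w')` of `(X, W)`. -/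
def AC2 {U V : Type} (M : CausalModel U V) (u : U → ℤ) (X : V) (x : ℤ)
    (φ : CausalFormula V) (W : Set V) (x' : ℤ) (w' : V → ℤ) : Prop :=
  X ∉ W ∧ x' ∈ M.R X ∧ (∀ Y ∈ W, w' Y ∈ M.R Y) ∧
  -- AC2(a): (M,u) ⊨ [X ← x', W ← w'] ¬φ
  ¬ sat M u (insert X W) (fun Y => if Y = X then x' else w' Y) φ ∧
  -- AC2(b): (M,u) ⊨ [X ← x, W ← w', Z' ← z*] φ for all subsets Z' of Z = Wᶜ
  ∀ Z' : Set V, Z' ⊆ Wᶜ →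
    sat M u (insert X (W ∪ Z'))
      (fun Y => if Y = X then x else if Y ∈ W then w' Y else M.solution u Y) φ

/-- `X = x` is a cause of `φ` in `(M,u)`: AC1 together with AC2 (AC3 is
automatic for single conjuncts). -/
def IsCause {U V : Type} (M : CausalModel U V) (u : U → ℤ) (X : V) (x : ℤ)
    (φ : CausalFormula V) : Prop :=
  (M.solution u X = x ∧ φ.holds (M.solution u)) ∧
  ∃ W x' w', AC2 M u X x φ W x' w'

/-- The degree of responsibility of `X = x` for `φ` in `(M,u)` : `0` if
`X = x` is not a cause of `φ`, and otherwise `1/(k+1)` where `k` is the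
minimal, over all AC2 witnesses, number of variables of `W` whose value in
`w'` differs from their value in the unique solution of `(M,u)`. -/
noncomputable def dr {U V : Type} (M : CausalModel U V) (u : U → ℤ) (X : V)
    (x : ℤ) (φ : CausalFormula V) : ℚ :=
  if IsCause M u X x φ then
    1 / ((sInf {k : ℕ | ∃ W x' w', AC2 M u X x φ W x' w' ∧
        {Y | Y ∈ W ∧ w' Y ≠ M.solution u Y}.ncard = k} : ℕ) + 1 : ℚ)
  else 0

/-- The degree of blame of setting `X` to `x` for `φ`, relative to the
epistemic state given by the (indexed) finite set of situations
`(Mod i, ctx i)` with probabilities `Pr i` : the expected degree of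
responsibility of `X = x` for `φ` in the situations `((Mod i)_{X ← x}, ctx i)`. -/
noncomputable def db {U V ι : Type} [Fintype ι] (Mod : ι → CausalModel U V)
    (ctx : ι → U → ℤ) (Pr : ι → ℚ) (X : V) (x : ℤ) (φ : CausalFormula V) : ℚ :=
  ∑ i, dr ((Mod i).intervene {X} (fun _ => x)) (ctx i) X x φ * Pr i

/-- The firing-squad model: ten marksmen `S₁, …, S₁₀` (here `Sum.inl i` for
`i : Fin 10`) and the prisoner's death `D` (here `Sum.inr ()`).  The
exogenous context determines which marksman `j` has the live bullet (encoded
as `u () = j + 1`); all marksmen shoot (`F_{Sᵢ} = 1`), and `D = S_j`. -/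
def squadModel : CausalModel Unit (Fin 10 ⊕ Unit) where
  Rexo := fun _ => {z : ℤ | 1 ≤ z ∧ z ≤ 10}
  R := fun _ => {0, 1}
  F := fun X u g =>
    match X with
    | Sum.inl _ => 1
    | Sum.inr _ =>
        if ∃ i : Fin 10, (i : ℤ) + 1 = u () ∧ g (Sum.inl i) = 1 then 1 else 0

/-- The context in which marksman `j` (zero-indexed: `j = 0` is marksman 1)
has the live bullet. -/
def squadCtx (j : Fin 10) : Unit → ℤ := fun _ => (j : ℤ) + 1

/-!
After the intervention `S₁ ← 1` every marksman still shoots and the prisoner dies, in every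
context. When marksman 1 holds the live bullet, resetting `S₁` to `0` with `W = ∅` saves the
prisoner while `S₁ = 1` keeps him dead under any restoration of the other variables, so his
responsibility is `1/(0+1) = 1`. When marksman `j ≠ 1` holds it, `D` is computed from `S_j` and
the intervened values alone, never from `S₁`; hence AC2(a) and AC2(b) with `Z' = ∅` contradict
each other, there is no cause and the responsibility is `0`. The blame is the expectation
`∑ⱼ dⱼ pⱼ = p₁`.
-/

namespace CausalModel

variable {U V : Type}

theorem solution_eq_of_unique {M : CausalModel U V} {u : U → ℤ} {s : V → ℤ}
    (hs : M.IsSolution u s) (huniq : ∀ t, M.IsSolution u t → t = s) : M.solution u = s :=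
  huniq _ (Classical.epsilon_spec ⟨s, hs⟩)

theorem intervene_intervene_of_subset (M : CausalModel U V) {A B : Set V} (hAB : A ⊆ B)
    (y z : V → ℤ) : (M.intervene A y).intervene B z = M.intervene B z := by
  simp only [intervene, CausalModel.mk.injEq, true_and]
  funext X u g
  by_cases hB : X ∈ B
  · simp [hB]
  · simp [hB, show X ∉ A from fun hA => hB (hAB hA)]

end CausalModel

section Responsibility

variable {U V : Type} {M : CausalModel U V} {u : U → ℤ} {X : V} {x : ℤ} {φ : CausalFormula V}

theorem dr_eq_one_of_AC2_empty (hX : M.solution u X = x) (hφ : φ.holds (M.solution u))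
    {x' : ℤ} {w' : V → ℤ} (h : AC2 M u X x φ ∅ x' w') : dr M u X x φ = 1 := by
  have hk : sInf {k : ℕ | ∃ W x' w', AC2 M u X x φ W x' w' ∧
      {Y | Y ∈ W ∧ w' Y ≠ M.solution u Y}.ncard = k} = 0 :=
    Nat.sInf_eq_zero.mpr (Or.inl ⟨∅, x', w', h, by simp⟩)
  rw [dr, if_pos ⟨⟨hX, hφ⟩, ∅, x', w', h⟩, hk]
  norm_num

/-- AC2(a) and AC2(b) with `Z' = ∅` evaluate `φ` under interventions on `insert X W` that differ
only at `X`. -/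
theorem dr_eq_zero_of_sat_independent
    (h : ∀ (A : Set V) (y y' : V → ℤ), (∀ Y ∈ A, Y ≠ X → y Y = y' Y) →
      (sat M u (insert X A) y φ ↔ sat M u (insert X A) y' φ)) :
    dr M u X x φ = 0 := by
  rw [dr, if_neg]
  rintro ⟨-, W, x', w', -, -, -, ha, hb⟩
  have hb₀ := hb ∅ (Set.empty_subset _)
  rw [Set.union_empty] at hb₀
  refine ha ((h W _ _ fun Y hY hYX => ?_).mp hb₀)
  simp [hY, hYX]

end Responsibility

namespace Squad

noncomputable def shot (A : Set (Fin 10 ⊕ Unit)) (y : Fin 10 ⊕ Unit → ℤ) (i : Fin 10) : ℤ :=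
  if Sum.inl i ∈ A then y (Sum.inl i) else 1

noncomputable def intervenedSolution (A : Set (Fin 10 ⊕ Unit)) (y : Fin 10 ⊕ Unit → ℤ) (j : Fin 10) :
    Fin 10 ⊕ Unit → ℤ
  | .inl i => shot A y i
  | .inr () => if Sum.inr () ∈ A then y (Sum.inr ()) else if shot A y j = 1 then 1 else 0

theorem F_death_squadCtx (j : Fin 10) (g : Fin 10 ⊕ Unit → ℤ) :
    squadModel.F (Sum.inr ()) (squadCtx j) g = if g (Sum.inl j) = 1 then 1 else 0 := by
  simp only [squadModel, squadCtx, add_left_inj, Nat.cast_inj, Fin.val_inj, exists_eq_left]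

theorem solution_intervene (A : Set (Fin 10 ⊕ Unit)) (y : Fin 10 ⊕ Unit → ℤ) (j : Fin 10) :
    (squadModel.intervene A y).solution (squadCtx j) = intervenedSolution A y j := by
  have hF : ∀ X g, (squadModel.intervene A y).F X (squadCtx j) g =
      if X ∈ A then y X else squadModel.F X (squadCtx j) g := fun _ _ => rfl
  refine CausalModel.solution_eq_of_unique ?_ fun t ht => ?_
  · intro X
    rw [hF]
    rcases X with i | u
    · simp [intervenedSolution, shot, squadModel]
    · cases u
      rw [F_death_squadCtx]
      rfl
  · have hshot : ∀ i, t (Sum.inl i) = shot A y i := fun i => by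
      rw [ht (Sum.inl i), hF]
      simp [shot, squadModel]
    funext X
    rcases X with i | u
    · exact hshot i
    · cases u
      rw [ht (Sum.inr ()), hF, F_death_squadCtx, hshot]
      rfl

theorem solution_shoot_first (j : Fin 10) :
    (squadModel.intervene {Sum.inl 0} fun _ => 1).solution (squadCtx j) = fun _ => 1 := by
  rw [solution_intervene]
  funext X
  rcases X with i | u <;> simp [intervenedSolution, shot]

theorem sat_shoot_first_iff (A : Set (Fin 10 ⊕ Unit)) (y : Fin 10 ⊕ Unit → ℤ) (j : Fin 10) :
    sat (squadModel.intervene {Sum.inl 0} fun _ => 1) (squadCtx j) (insert (Sum.inl 0) A) y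
        (CausalFormula.eq (Sum.inr ()) 1) ↔
      intervenedSolution (insert (Sum.inl 0) A) y j (Sum.inr ()) = 1 := by
  rw [sat, CausalModel.intervene_intervene_of_subset _ (by simp), solution_intervene]
  rfl

theorem AC2_shoot_first_self :
    AC2 (squadModel.intervene {Sum.inl 0} fun _ => 1) (squadCtx 0) (Sum.inl 0) 1
      (CausalFormula.eq (Sum.inr ()) 1) ∅ 0 fun _ => 0 := by
  refine ⟨by simp, by simp [CausalModel.intervene, squadModel], by simp, ?_, fun Z' _ => ?_⟩
  · rw [sat_shoot_first_iff]
    simp [intervenedSolution, shot]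
  · rw [sat_shoot_first_iff, solution_shoot_first]
    simp [intervenedSolution, shot]

theorem sat_shoot_first_independent {j : Fin 10} (hj : j ≠ 0) (A : Set (Fin 10 ⊕ Unit))
    (y y' : Fin 10 ⊕ Unit → ℤ) (hyy' : ∀ Y ∈ A, Y ≠ Sum.inl 0 → y Y = y' Y) :
    sat (squadModel.intervene {Sum.inl 0} fun _ => 1) (squadCtx j) (insert (Sum.inl 0) A) y
        (CausalFormula.eq (Sum.inr ()) 1) ↔
      sat (squadModel.intervene {Sum.inl 0} fun _ => 1) (squadCtx j) (insert (Sum.inl 0) A) y'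
        (CausalFormula.eq (Sum.inr ()) 1) := by
  have hD := hyy' (Sum.inr ())
  have hS := hyy' (Sum.inl j)
  simp only [sat_shoot_first_iff, intervenedSolution, shot, Set.mem_insert_iff, reduceCtorEq, false_or,
    Sum.inl.injEq, hj] at hD hS ⊢
  split_ifs <;> simp_all

theorem dr_shoot_first (j : Fin 10) :
    dr (squadModel.intervene {Sum.inl 0} fun _ => 1) (squadCtx j)
        (Sum.inl 0) 1 (CausalFormula.eq (Sum.inr ()) 1) = if j = 0 then 1 else 0 := by
  split_ifs with hj
  · subst hj
    have hall := solution_shoot_first 0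
    exact dr_eq_one_of_AC2_empty (by rw [hall]) (by simp [CausalFormula.holds, hall])
      AC2_shoot_first_self
  · exact dr_eq_zero_of_sat_independent (sat_shoot_first_independent hj)

end Squad

theorem squad_blame_general (Pr : Fin 10 → ℚ) :
    (∀ j : Fin 10,
      dr (squadModel.intervene {Sum.inl 0} fun _ => 1) (squadCtx j)
          (Sum.inl 0) 1 (CausalFormula.eq (Sum.inr ()) 1)
        = if j = 0 then 1 else 0) ∧
    db (fun _ : Fin 10 => squadModel) squadCtx Pr
        (Sum.inl 0) 1 (CausalFormula.eq (Sum.inr ()) 1) = Pr 0 :=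
  ⟨Squad.dr_shoot_first, by simp [db, Squad.dr_shoot_first]⟩

/-- In the firing-squad model, relative to the epistemic state giving
probability `Pr j` to the context in which marksman `j` has the live bullet:
the degree of responsibility of marksman 1's shot `S₁ = 1` for the death
`D = 1` is `1` in the context where he has the bullet and `0` otherwise, and
hence his degree of blame for the death is `p₁ = Pr 0`. -/
theorem squad_blame (Pr : Fin 10 → ℚ) (hPr : ∀ j, 0 ≤ Pr j)
    (hPr1 : ∑ j, Pr j = 1) :
    (∀ j : Fin 10,
      dr (squadModel.intervene {Sum.inl 0} fun _ => 1) (squadCtx j)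
          (Sum.inl 0) 1 (CausalFormula.eq (Sum.inr ()) 1)
        = if j = 0 then 1 else 0) ∧
    db (fun _ : Fin 10 => squadModel) squadCtx Pr
        (Sum.inl 0) 1 (CausalFormula.eq (Sum.inr ()) 1) = Pr 0 :=
  squad_blame_general Pr
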